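/- arXiv:1504.03398 — 4 statements merged into one kernel-verified Lean document; each statement's English description precedes it below -/
import Mathlib

section
/- Let m ≥ 1 and λ, q ∈ [0,1] with λ + q ≤ 1. Consider the random string ρ ∈ {0,1,*}^m generated as follows: with probability λ, ρ = 1^m; with probability q, ρ is drawn from the product distribution on {*,1}^m where each coordinate is * with probability 1/2, conditioned on ρ ≠ 1^m; with probability 1-λ-q, ρ is drawn from the uniform distribution on {0,1}^m conditioned on ρ ≠ 1^m. Suppose λ + q·t = 2^{-m} where t ∈ [0,1]. Let Y be an independent Bernoulli(t) random variable, and define X ∈ {0,1}^m by X_i = Y if ρ_i = * and X_i = ρ_i otherwise. Then X is uniformly distributed on {0,1}^m. -/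
open scoped Classical BigOperators

/-- The probability mass function of the initial random projection
`R_init` restricted to a single block of length `m`:  with probability `lam`
the block is `1^m`; with probability `q` it is drawn from the product
distribution `{*_{1/2}, 1_{1/2}}^m` conditioned on not being `1^m`;
with probability `1-lam-q` it is drawn uniformly from `{0,1}^m`
conditioned on not being `1^m`.  Here `none` encodes `*` and `some b`
encodes the bit `b`. -/
noncomputable def initBlockPMF (m : ℕ) (lam q : ℝ) (ρ : Fin m → Option Bool) : ℝ :=
  (if ρ = (fun _ => some true) then lam else 0)
  + (if (∀ i, ρ i = none ∨ ρ i = some true) ∧ ρ ≠ (fun _ => some true) then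
      q * ((1 / 2 : ℝ) ^ m / (1 - (1 / 2 : ℝ) ^ m)) else 0)
  + (if (∀ i, (ρ i).isSome) ∧ ρ ≠ (fun _ => some true) then
      (1 - lam - q) * ((1 / 2 : ℝ) ^ m / (1 - (1 / 2 : ℝ) ^ m)) else 0)

lemma sum_B_aux {m : ℕ} (F : (Fin m → Option Bool) → ℝ) :
    ∑ ρ : Fin m → Option Bool, (if (∀ i, ρ i = none ∨ ρ i = some true) then F ρ else 0)
      = ∑ b : Fin m → Bool, F (fun i => if b i then some true else none) := by
  rw [← Finset.sum_filter]
  refine Finset.sum_nbij' (fun ρ => fun j => (ρ j).getD false)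
    (fun b => fun i => if b i then some true else none) ?_ ?_ ?_ ?_ ?_
  · intro a _; exact Finset.mem_univ _
  · intro b _
    simp only [Finset.mem_filter, Finset.mem_univ, true_and]
    intro i; by_cases h : b i <;> simp [h]
  · intro a ha
    simp only [Finset.mem_filter, Finset.mem_univ, true_and] at ha
    funext i
    rcases ha i with h | h <;> simp [h]
  · intro b _
    funext i; by_cases h : b i <;> simp [h]
  · intro a ha
    simp only [Finset.mem_filter, Finset.mem_univ, true_and] at ha
    congr 1
    funext i
    rcases ha i with h | h <;> simp [h]

lemma sum_C_aux {m : ℕ} (F : (Fin m → Option Bool) → ℝ) :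
    ∑ ρ : Fin m → Option Bool, (if (∀ i, (ρ i).isSome) then F ρ else 0)
      = ∑ b : Fin m → Bool, F (fun i => some (b i)) := by
  rw [← Finset.sum_filter]
  refine Finset.sum_nbij' (fun ρ => fun j => (ρ j).getD false)
    (fun b => fun i => some (b i)) ?_ ?_ ?_ ?_ ?_
  · intro a _; exact Finset.mem_univ _
  · intro b _
    simp
  · intro a ha
    simp only [Finset.mem_filter, Finset.mem_univ, true_and] at ha
    funext i
    rcases Option.isSome_iff_exists.mp (ha i) with ⟨x, hx⟩
    simp [hx]
  · intro b _
    funext i; simp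
  · intro a ha
    simp only [Finset.mem_filter, Finset.mem_univ, true_and] at ha
    congr 1
    funext i
    rcases Option.isSome_iff_exists.mp (ha i) with ⟨x, hx⟩
    simp [hx]

/-- Lemma 8.1: if `lam + q·t = 2^{-m}`, and `X` is obtained from the random
restriction `ρ ← R_init` by substituting an independent Bernoulli(`t`) bit
`Y` for all `*`-coordinates, then `X` is uniform on `{0,1}^m`: every target
string `z` has probability exactly `(1/2)^m`. -/
theorem stmt_3 (m : ℕ) (hm : 1 ≤ m) (lam q t : ℝ)
    (hlam : 0 ≤ lam) (hq : 0 ≤ q) (hlamq : lam + q ≤ 1)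
    (ht0 : 0 ≤ t) (ht1 : t ≤ 1)
    (hkey : lam + q * t = (1 / 2 : ℝ) ^ m) (z : Fin m → Bool) :
    ∑ ρ : Fin m → Option Bool, initBlockPMF m lam q ρ *
      (t * (if (fun i => (ρ i).getD true) = z then 1 else 0)
        + (1 - t) * (if (fun i => (ρ i).getD false) = z then 1 else 0))
      = (1 / 2 : ℝ) ^ m := by
  set p : ℝ := (1 / 2 : ℝ) ^ m with hp
  set c : ℝ := p / (1 - p) with hc
  set one : Fin m → Option Bool := (fun _ => some true) with hone
  set f : (Fin m → Option Bool) → ℝ := fun ρ =>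
    (t * (if (fun i => (ρ i).getD true) = z then 1 else 0)
      + (1 - t) * (if (fun i => (ρ i).getD false) = z then 1 else 0)) with hf
  have honeB : ∀ i : Fin m, one i = none ∨ one i = some true := fun i => Or.inr rfl
  have honeC : ∀ i : Fin m, (one i).isSome := fun i => rfl
  have step1 : ∀ ρ : Fin m → Option Bool,
      initBlockPMF m lam q ρ * f ρ =
        (if ρ = one then (lam - q * c - (1 - lam - q) * c) * f ρ else 0)
        + (if (∀ i, ρ i = none ∨ ρ i = some true) then q * c * f ρ else 0)
        + (if (∀ i, (ρ i).isSome) then (1 - lam - q) * c * f ρ else 0) := by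
    intro ρ
    by_cases h1 : ρ = one
    · subst h1
      have hB1 : ¬((∀ i : Fin m, one i = none ∨ one i = some true) ∧ one ≠ one) := by
        simp
      have hC1 : ¬((∀ i : Fin m, (one i).isSome) ∧ one ≠ one) := by
        simp
      rw [initBlockPMF, if_pos rfl, if_neg hB1, if_neg hC1, if_pos rfl,
        if_pos honeB, if_pos honeC]
      ring
    · have eB : ((∀ i : Fin m, ρ i = none ∨ ρ i = some true) ∧ ρ ≠ one)
          ↔ (∀ i : Fin m, ρ i = none ∨ ρ i = some true) := and_iff_left h1
      have eC : ((∀ i : Fin m, (ρ i).isSome) ∧ ρ ≠ one)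
          ↔ (∀ i : Fin m, (ρ i).isSome) := and_iff_left h1
      rw [initBlockPMF, if_neg h1, if_neg h1]
      rw [if_congr eB rfl rfl, if_congr eC rfl rfl]
      split_ifs <;> ring
  rw [Finset.sum_congr rfl (fun ρ _ => step1 ρ)]
  rw [Finset.sum_add_distrib, Finset.sum_add_distrib]
  have hA : ∑ ρ : Fin m → Option Bool,
      (if ρ = one then (lam - q * c - (1 - lam - q) * c) * f ρ else 0)
      = (lam - q * c - (1 - lam - q) * c) * f one := by
    rw [Finset.sum_ite_eq']; simp
  have hgt : ∀ b : Fin m → Bool,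
      (fun i => ((if b i then some true else none : Option Bool)).getD true)
        = fun _ : Fin m => true := by
    intro b; funext i; by_cases h : b i <;> simp [h]
  have hgf : ∀ b : Fin m → Bool,
      (fun i => ((if b i then some true else none : Option Bool)).getD false) = b := by
    intro b; funext i; by_cases h : b i <;> simp [h]
  have hind : ∀ u : ℝ, ∑ b : Fin m → Bool, (if b = z then u else 0) = u := by
    intro u
    rw [Finset.sum_ite_eq']; simp
  have hcard : ((Finset.univ : Finset (Fin m → Bool)).card : ℝ) = (2 : ℝ) ^ m := by
    rw [Finset.card_univ]
    simp
  set I : ℝ := (if (fun _ : Fin m => true) = z then (1 : ℝ) else 0) with hI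
  have hB : ∑ ρ : Fin m → Option Bool,
      (if (∀ i, ρ i = none ∨ ρ i = some true) then q * c * f ρ else 0)
      = q * c * ((2 : ℝ) ^ m * (t * I) + (1 - t)) := by
    rw [sum_B_aux (fun ρ => q * c * f ρ)]
    have key : ∀ b : Fin m → Bool,
        q * c * f (fun i => if b i then some true else none)
          = q * c * (t * I) + (if b = z then q * c * (1 - t) else 0) := by
      intro b
      simp only [hf, hgt b, hgf b, hI]
      split_ifs <;> ring
    rw [Finset.sum_congr rfl (fun b _ => key b), Finset.sum_add_distrib,
      hind (q * c * (1 - t)), Finset.sum_const, nsmul_eq_mul, hcard]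
    ring
  have hC : ∑ ρ : Fin m → Option Bool,
      (if (∀ i, (ρ i).isSome) then (1 - lam - q) * c * f ρ else 0)
      = (1 - lam - q) * c := by
    rw [sum_C_aux (fun ρ => (1 - lam - q) * c * f ρ)]
    have key : ∀ b : Fin m → Bool,
        (1 - lam - q) * c * f (fun i => some (b i))
          = (if b = z then (1 - lam - q) * c else 0) := by
      intro b
      have e1 : (fun i => (some (b i)).getD true) = b := by funext i; simp
      have e2 : (fun i => (some (b i)).getD false) = b := by funext i; simp
      simp only [hf, e1, e2]
      split_ifs <;> ring
    rw [Finset.sum_congr rfl (fun b _ => key b), hind]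
  rw [hA, hB, hC]
  have hfone : f one = I := by
    have e1 : (fun i : Fin m => (one i).getD true) = (fun _ : Fin m => true) := rfl
    have e2 : (fun i : Fin m => (one i).getD false) = (fun _ : Fin m => true) := rfl
    simp only [hf, e1, e2, hI]
    ring
  rw [hfone]
  -- arithmetic
  have hplt : p < 1 := by
    rw [hp]
    exact pow_lt_one₀ (by norm_num) (by norm_num) (by omega)
  have hpne : (1 - p) ≠ 0 := by linarith
  have hp2 : p * (2 : ℝ) ^ m = 1 := by
    rw [hp, ← mul_pow]; norm_num
  have hcp : c * (1 - p) = p := by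
    rw [hc]; exact div_mul_cancel₀ p hpne
  by_cases hz : (fun _ : Fin m => true) = z
  · simp only [hI, if_pos hz]
    have h2m : c * ((2 : ℝ) ^ m - 1) = 1 := by
      rw [hc, div_mul_eq_mul_div, div_eq_one_iff_eq hpne]
      linarith [hp2]
    linear_combination hkey + q * t * h2m
  · simp only [hI, if_neg hz]
    have h3 : c * (1 - lam - q * t) = p := by
      rw [show (1 - lam - q * t : ℝ) = 1 - p by linarith]
      exact hcp
    linear_combination h3
end

section
/- Let S be a nonempty finite set, t, t' ∈ (0,1), λ ∈ [0,1], and set q' = ((1-t)^{|S|} - λ)/t', assumed to lie in [0, 1-λ]. Consider the random string ρ ∈ {0,1,*}^S generated as: with probability λ, ρ = 1^S; with probability q', ρ is drawn from the product distribution where each coordinate is * with probability t and 1 with probability 1-t, conditioned on ρ ≠ 1^S; with probability 1-λ-q', ρ is drawn from the product distribution where each coordinate is 0 with probability t and 1 with probability 1-t, conditioned on ρ ≠ 1^S. Let Y be an independent Bernoulli(t') random variable and define Z ∈ {0,1}^S by Z_i = Y if ρ_i = * and Z_i = ρ_i otherwise. Then Z is distributed as the product distribution on {0,1}^S where each coordinate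 is 1 with probability 1-t and 0 with probability t. -/
open scoped Classical BigOperators

/-- The probability mass function of a block of the subsequent random
projection `R(τ)` on a nonempty finite index set `S`: with probability `lam`
the block is `1^S`; with probability `q'` it is drawn from the product
distribution where each coordinate is `*` with probability `t` and `1` with
probability `1-t`, conditioned on not being `1^S`; with probability
`1-lam-q'` it is drawn from the product distribution where each coordinate is
`0` with probability `t` and `1` with probability `1-t`, conditioned on not
being `1^S`.  `none` encodes `*`. -/
noncomputable def subsBlockPMF (S : Type) [Fintype S] (lam q' t : ℝ)
    (ρ : S → Option Bool) : ℝ :=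
  (if ρ = (fun _ => some true) then lam else 0)
  + (if (∀ i, ρ i = none ∨ ρ i = some true) ∧ ρ ≠ (fun _ => some true) then
      q' * ((∏ i, (if ρ i = none then t else 1 - t)) /
        (1 - (1 - t) ^ (Fintype.card S))) else 0)
  + (if (∀ i, (ρ i).isSome) ∧ ρ ≠ (fun _ => some true) then
      (1 - lam - q') * ((∏ i, (if ρ i = some false then t else 1 - t)) /
        (1 - (1 - t) ^ (Fintype.card S))) else 0)

lemma sum_pi_prod {S : Type} [Fintype S] (g : S → Option Bool → ℝ) :
    (∑ ρ : S → Option Bool, ∏ i, g i (ρ i)) = ∏ i, ∑ x : Option Bool, g i x := by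
  classical
  rw [Finset.prod_univ_sum, Fintype.piFinset_univ]

lemma ite_eq_prod {S : Type} [Fintype S] {β : Type*} [DecidableEq β] (p q : S → β) :
    (if p = q then (1:ℝ) else 0) = ∏ i, if p i = q i then 1 else 0 := by
  by_cases h : p = q
  · simp [h]
  · rw [if_neg h]
    obtain ⟨i, hi⟩ := Function.ne_iff.mp h
    exact (Finset.prod_eq_zero (Finset.mem_univ i) (by simp [hi])).symm

lemma sum_optionBool (f : Option Bool → ℝ) :
    ∑ x : Option Bool, f x = f none + f (some false) + f (some true) := by
  rw [Fintype.sum_option, Fintype.sum_bool]; ring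

/-- Lemma 8.2: with `q' = ((1-t)^{|S|} - lam)/t'`, substituting an
independent Bernoulli(`t'`) bit `Y` for the `*`-coordinates of `ρ ← R(τ)`
yields the product distribution on `{0,1}^S` in which each coordinate is `1`
with probability `1-t` and `0` with probability `t`. -/
theorem stmt_4 (S : Type) [Fintype S] [Nonempty S] (lam q' t t' : ℝ)
    (ht : 0 < t) (ht1 : t < 1) (ht' : 0 < t') (ht'1 : t' < 1)
    (hlam : 0 ≤ lam) (hlam1 : lam ≤ 1)
    (hq' : q' = ((1 - t) ^ (Fintype.card S) - lam) / t')
    (hq'0 : 0 ≤ q') (hq'1 : q' ≤ 1 - lam) (z : S → Bool) :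
    ∑ ρ : S → Option Bool, subsBlockPMF S lam q' t ρ *
      (t' * (if (fun i => (ρ i).getD true) = z then 1 else 0)
        + (1 - t') * (if (fun i => (ρ i).getD false) = z then 1 else 0))
      = ∏ i, (if z i then 1 - t else t) := by
  classical
  have hcard : Fintype.card S ≠ 0 := Fintype.card_ne_zero
  have hclt : (1 - t) ^ (Fintype.card S) < 1 := pow_lt_one₀ (by linarith) (by linarith) hcard
  have hD : (0:ℝ) < 1 - (1 - t) ^ (Fintype.card S) := by linarith
  have hDne : (1 : ℝ) - (1 - t) ^ (Fintype.card S) ≠ 0 := ne_of_gt hD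
  have hpmf : ∀ ρ : S → Option Bool, subsBlockPMF S lam q' t ρ =
      lam * ∏ i, (if ρ i = some true then (1:ℝ) else 0)
      + q' / (1 - (1 - t) ^ (Fintype.card S)) *
          ((∏ i, (if ρ i = none then t else if ρ i = some true then 1 - t else 0))
            - ∏ i, (if ρ i = some true then 1 - t else 0))
      + (1 - lam - q') / (1 - (1 - t) ^ (Fintype.card S)) *
          ((∏ i, (if ρ i = some false then t else if ρ i = some true then 1 - t else 0))
            - ∏ i, (if ρ i = some true then 1 - t else 0)) := by
    intro ρ
    unfold subsBlockPMF
    by_cases hρ : ρ = fun _ => some true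
    · subst hρ
      rw [if_pos rfl, if_neg (by simp), if_neg (by simp)]
      simp [Finset.prod_const]
    · obtain ⟨i0, hi0⟩ := Function.ne_iff.mp hρ
      rw [if_neg hρ]
      have hP1 : (∏ i, (if ρ i = some true then (1:ℝ) else 0)) = 0 :=
        Finset.prod_eq_zero (Finset.mem_univ i0) (if_neg hi0)
      have hG : (∏ i, (if ρ i = some true then (1:ℝ) - t else 0)) = 0 :=
        Finset.prod_eq_zero (Finset.mem_univ i0) (if_neg hi0)
      by_cases h2 : ∀ i, ρ i = none ∨ ρ i = some true
      · have hi0n : ρ i0 = none := (h2 i0).resolve_right hi0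
        have h4 : ¬ (∀ i, (ρ i).isSome) := by
          intro h; have := h i0; rw [hi0n] at this; simp at this
        rw [if_pos ⟨h2, hρ⟩, if_neg (fun h => h4 h.1)]
        have hH1 : (∏ i, (if ρ i = none then t else if ρ i = some true then 1 - t else 0))
            = ∏ i, (if ρ i = none then t else 1 - t) := by
          refine Finset.prod_congr rfl fun i _ => ?_
          rcases h2 i with h | h <;> simp [h]
        have hH3 : (∏ i, (if ρ i = some false then t else if ρ i = some true then 1 - t else 0)) = 0 :=
          Finset.prod_eq_zero (Finset.mem_univ i0) (by simp [hi0n])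
        rw [hH1, hH3, hP1, hG]
        ring
      · push_neg at h2
        obtain ⟨i1, hi1n, hi1t⟩ := h2
        have hi1 : ρ i1 = some false := by
          rcases hx : ρ i1 with _ | b
          · exact absurd hx hi1n
          · cases b
            · rfl
            · exact absurd hx hi1t
        rw [if_neg (by rintro ⟨h, -⟩; rcases h i1 with h | h; exacts [hi1n h, hi1t h])]
        have hH1 : (∏ i, (if ρ i = none then t else if ρ i = some true then 1 - t else 0)) = 0 :=
          Finset.prod_eq_zero (Finset.mem_univ i1) (by simp [hi1])
        by_cases h4 : ∀ i, (ρ i).isSome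
        · rw [if_pos ⟨h4, hρ⟩]
          have hH3 : (∏ i, (if ρ i = some false then t else if ρ i = some true then 1 - t else 0))
              = ∏ i, (if ρ i = some false then t else 1 - t) := by
            refine Finset.prod_congr rfl fun i _ => ?_
            rcases hx : ρ i with _ | b
            · exact absurd (hx ▸ h4 i) (by simp)
            · cases b <;> simp [hx]
          rw [hH1, hH3, hP1, hG]; ring
        · rw [if_neg (fun h => h4 h.1)]
          obtain ⟨i2, hi2⟩ := not_forall.mp h4
          have hi2n : ρ i2 = none := Option.not_isSome_iff_eq_none.mp hi2
          have hH3 : (∏ i, (if ρ i = some false then t else if ρ i = some true then 1 - t else 0)) = 0 :=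
            Finset.prod_eq_zero (Finset.mem_univ i2) (by simp [hi2n])
          rw [hH1, hH3, hP1, hG]; ring
  have hw : ∀ ρ : S → Option Bool,
      (t' * (if (fun i => (ρ i).getD true) = z then (1:ℝ) else 0)
        + (1 - t') * (if (fun i => (ρ i).getD false) = z then 1 else 0))
      = t' * ∏ i, (if (ρ i).getD true = z i then (1:ℝ) else 0)
        + (1 - t') * ∏ i, (if (ρ i).getD false = z i then 1 else 0) := by
    intro ρ
    rw [ite_eq_prod (fun i => (ρ i).getD true) z, ite_eq_prod (fun i => (ρ i).getD false) z]
  have E1 : ∀ i : S, (∑ x : Option Bool,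
      (if x = some true then (1:ℝ) else 0) * (if x.getD true = z i then 1 else 0))
      = (if z i then 1 else 0) := by
    intro i; rw [sum_optionBool]; cases hzi : z i <;> simp
  have E2 : ∀ i : S, (∑ x : Option Bool,
      (if x = some true then (1:ℝ) else 0) * (if x.getD false = z i then 1 else 0))
      = (if z i then 1 else 0) := by
    intro i; rw [sum_optionBool]; cases hzi : z i <;> simp
  have E3 : ∀ i : S, (∑ x : Option Bool,
      (if x = none then t else if x = some true then 1 - t else 0) * (if x.getD true = z i then 1 else 0))
      = (if z i then 1 else 0) := by
    intro i; rw [sum_optionBool]; cases hzi : z i <;> simp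
  have E4 : ∀ i : S, (∑ x : Option Bool,
      (if x = none then t else if x = some true then 1 - t else 0) * (if x.getD false = z i then 1 else 0))
      = (if z i then 1 - t else t) := by
    intro i; rw [sum_optionBool]; cases hzi : z i <;> simp
  have E5 : ∀ i : S, (∑ x : Option Bool,
      (if x = some false then t else if x = some true then 1 - t else 0) * (if x.getD true = z i then 1 else 0))
      = (if z i then 1 - t else t) := by
    intro i; rw [sum_optionBool]; cases hzi : z i <;> simp
  have E6 : ∀ i : S, (∑ x : Option Bool,
      (if x = some false then t else if x = some true then 1 - t else 0) * (if x.getD false = z i then 1 else 0))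
      = (if z i then 1 - t else t) := by
    intro i; rw [sum_optionBool]; cases hzi : z i <;> simp
  have E7 : ∀ i : S, (∑ x : Option Bool,
      (if x = some true then (1:ℝ) - t else 0) * (if x.getD true = z i then 1 else 0))
      = (if z i then 1 - t else 0) := by
    intro i; rw [sum_optionBool]; cases hzi : z i <;> simp
  have E8 : ∀ i : S, (∑ x : Option Bool,
      (if x = some true then (1:ℝ) - t else 0) * (if x.getD false = z i then 1 else 0))
      = (if z i then 1 - t else 0) := by
    intro i; rw [sum_optionBool]; cases hzi : z i <;> simp
  calc
    ∑ ρ : S → Option Bool, subsBlockPMF S lam q' t ρ *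
      (t' * (if (fun i => (ρ i).getD true) = z then 1 else 0)
        + (1 - t') * (if (fun i => (ρ i).getD false) = z then 1 else 0))
      = ∑ ρ : S → Option Bool,
        (lam * t' * ∏ i, ((if ρ i = some true then (1:ℝ) else 0) * (if (ρ i).getD true = z i then 1 else 0))
        + lam * (1 - t') * ∏ i, ((if ρ i = some true then (1:ℝ) else 0) * (if (ρ i).getD false = z i then 1 else 0))
        + q' / (1 - (1 - t) ^ (Fintype.card S)) * t' * ∏ i, ((if ρ i = none then t else if ρ i = some true then 1 - t else 0) * (if (ρ i).getD true = z i then 1 else 0))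
        + q' / (1 - (1 - t) ^ (Fintype.card S)) * (1 - t') * ∏ i, ((if ρ i = none then t else if ρ i = some true then 1 - t else 0) * (if (ρ i).getD false = z i then 1 else 0))
        + (1 - lam - q') / (1 - (1 - t) ^ (Fintype.card S)) * t' * ∏ i, ((if ρ i = some false then t else if ρ i = some true then 1 - t else 0) * (if (ρ i).getD true = z i then 1 else 0))
        + (1 - lam - q') / (1 - (1 - t) ^ (Fintype.card S)) * (1 - t') * ∏ i, ((if ρ i = some false then t else if ρ i = some true then 1 - t else 0) * (if (ρ i).getD false = z i then 1 else 0))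
        - (q' / (1 - (1 - t) ^ (Fintype.card S)) + (1 - lam - q') / (1 - (1 - t) ^ (Fintype.card S))) * t' * ∏ i, ((if ρ i = some true then (1:ℝ) - t else 0) * (if (ρ i).getD true = z i then 1 else 0))
        - (q' / (1 - (1 - t) ^ (Fintype.card S)) + (1 - lam - q') / (1 - (1 - t) ^ (Fintype.card S))) * (1 - t') * ∏ i, ((if ρ i = some true then (1:ℝ) - t else 0) * (if (ρ i).getD false = z i then 1 else 0))) := by
        refine Finset.sum_congr rfl fun ρ _ => ?_
        rw [hpmf ρ, hw ρ]
        simp only [Finset.prod_mul_distrib]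
        ring
    _ = lam * t' * ∏ i, (if z i then (1:ℝ) else 0)
        + lam * (1 - t') * ∏ i, (if z i then (1:ℝ) else 0)
        + q' / (1 - (1 - t) ^ (Fintype.card S)) * t' * ∏ i, (if z i then (1:ℝ) else 0)
        + q' / (1 - (1 - t) ^ (Fintype.card S)) * (1 - t') * ∏ i, (if z i then 1 - t else t)
        + (1 - lam - q') / (1 - (1 - t) ^ (Fintype.card S)) * t' * ∏ i, (if z i then 1 - t else t)
        + (1 - lam - q') / (1 - (1 - t) ^ (Fintype.card S)) * (1 - t') * ∏ i, (if z i then 1 - t else t)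
        - (q' / (1 - (1 - t) ^ (Fintype.card S)) + (1 - lam - q') / (1 - (1 - t) ^ (Fintype.card S))) * t' * ∏ i, (if z i then 1 - t else 0)
        - (q' / (1 - (1 - t) ^ (Fintype.card S)) + (1 - lam - q') / (1 - (1 - t) ^ (Fintype.card S))) * (1 - t') * ∏ i, (if z i then 1 - t else 0) := by
        simp only [Finset.sum_add_distrib, Finset.sum_sub_distrib, ← Finset.mul_sum]
        rw [sum_pi_prod (fun i x => (if x = some true then (1:ℝ) else 0) * (if x.getD true = z i then 1 else 0)),
          sum_pi_prod (fun i x => (if x = some true then (1:ℝ) else 0) * (if x.getD false = z i then 1 else 0)),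
          sum_pi_prod (fun i x => (if x = none then t else if x = some true then 1 - t else 0) * (if x.getD true = z i then 1 else 0)),
          sum_pi_prod (fun i x => (if x = none then t else if x = some true then 1 - t else 0) * (if x.getD false = z i then 1 else 0)),
          sum_pi_prod (fun i x => (if x = some false then t else if x = some true then 1 - t else 0) * (if x.getD true = z i then 1 else 0)),
          sum_pi_prod (fun i x => (if x = some false then t else if x = some true then 1 - t else 0) * (if x.getD false = z i then 1 else 0)),
          sum_pi_prod (fun i x => (if x = some true then (1:ℝ) - t else 0) * (if x.getD true = z i then 1 else 0)),
          sum_pi_prod (fun i x => (if x = some true then (1:ℝ) - t else 0) * (if x.getD false = z i then 1 else 0))]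
        simp only [Finset.prod_congr rfl fun i (_ : i ∈ Finset.univ) => E1 i,
          Finset.prod_congr rfl fun i (_ : i ∈ Finset.univ) => E2 i,
          Finset.prod_congr rfl fun i (_ : i ∈ Finset.univ) => E3 i,
          Finset.prod_congr rfl fun i (_ : i ∈ Finset.univ) => E4 i,
          Finset.prod_congr rfl fun i (_ : i ∈ Finset.univ) => E5 i,
          Finset.prod_congr rfl fun i (_ : i ∈ Finset.univ) => E6 i,
          Finset.prod_congr rfl fun i (_ : i ∈ Finset.univ) => E7 i,
          Finset.prod_congr rfl fun i (_ : i ∈ Finset.univ) => E8 i]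
    _ = ∏ i, (if z i then 1 - t else t) := by
        by_cases hz : z = fun _ => true
        · have hI : (∏ i, (if z i then (1:ℝ) else 0)) = 1 := by simp [hz]
          have hG0 : (∏ i, (if z i then (1:ℝ) - t else 0)) = (1 - t) ^ (Fintype.card S) := by
            simp [hz, Finset.prod_const]
          have hP : (∏ i, (if z i then (1:ℝ) - t else t)) = (1 - t) ^ (Fintype.card S) := by
            simp [hz, Finset.prod_const]
          rw [hI, hG0, hP, hq']
          field_simp
          ring
        · obtain ⟨i0, hi0⟩ := Function.ne_iff.mp hz
          have hi0' : z i0 = false := by simpa using hi0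
          have hI : (∏ i, (if z i then (1:ℝ) else 0)) = 0 :=
            Finset.prod_eq_zero (Finset.mem_univ i0) (by simp [hi0'])
          have hG0 : (∏ i, (if z i then (1:ℝ) - t else 0)) = 0 :=
            Finset.prod_eq_zero (Finset.mem_univ i0) (by simp [hi0'])
          rw [hI, hG0, hq']
          field_simp
          ring
end

section
/- Let F : {0,1}^{w₀} → {0,1} be a CNF of width at most r (each clause contains at most r literals), let τ ∈ {0,*}^{w₀} be a restriction with at least one *-coordinate, and let t ∈ [0,1]. Let Y be drawn from the product distribution on {0,1}^{w₀} where each coordinate is independently 1 with probability t. Then Pr[(OR_{w₀} ↾ τ)(Y) ≠ F(Y)] ≥ min{Pr[(OR ↾ τ)(Y)=0], Pr[(OR ↾ τ)(Y)=1]} − r·t, where OR_{w₀} ↾ τ denotes the OR of the variables left free by τ (all other variables fixed to 0). -/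
open scoped Classical BigOperators

/-!
Let `A` be the event that `OR ↾ τ` is true at `Y`, i.e. some coordinate of `S = τ⁻¹(*)` is `1`,
and let `G` be the value of `F` at `Y` with the coordinates in `S` set to `0`. Then `F(Y) = G`
outside `A`, and `G` does not look at `S`, so it is independent of `A`. Hence errors occur on
`¬A ∧ G` and on `A ∧ ¬G ∧ ¬F(Y)`, and
`Pr[error] ≥ Pr[¬A] Pr[G] + Pr[A] Pr[¬G] - Pr[¬G ∧ F(Y)] ≥ min(Pr[¬A], Pr[A]) - Pr[¬G ∧ F(Y)]`.
When `G` fails, fix a clause falsified by the zeroed point. It can only be satisfied by `Y`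
through one of its at most `r` positive literals in `S`, and since the clause is chosen without
looking at `S`, each of these is set to `1` with probability `t`: so `Pr[¬G ∧ F(Y)] ≤ r t`.
-/

open Finset Function

theorem sum_mul_sum_of_dependsOn {ι α R : Type*} [Fintype ι] [DecidableEq ι] [Fintype α]
    [CommSemiring R]
    (p : ι → α → R) (s : Finset ι) {f g : (ι → α) → R}
    (hf : DependsOn f (s : Set ι)) (hg : DependsOn g (↑s)ᶜ) :
    (∑ y, (∏ i, p i (y i)) * f y) * (∑ y, (∏ i, p i (y i)) * g y) =
      (∑ y, (∏ i, p i (y i)) * (f y * g y)) * ∑ y : ι → α, ∏ i, p i (y i) := by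
  set w : (ι → α) → R := fun y => ∏ i, p i (y i)
  -- swapping the coordinates outside `s` between two points is an involution preserving `w ⊗ w`
  let mix : (ι → α) × (ι → α) → (ι → α) × (ι → α) :=
    fun q => (s.piecewise q.1 q.2, s.piecewise q.2 q.1)
  have mix_involutive : Involutive mix := fun q => by
    ext i <;> by_cases hi : i ∈ s <;> simp [mix, hi]
  have hmix : ∀ q, w (mix q).1 * (f (mix q).1 * g (mix q).1) * w (mix q).2 =
      w q.1 * f q.1 * (w q.2 * g q.2) := by
    rintro ⟨y, y'⟩
    have hw : w (s.piecewise y y') * w (s.piecewise y' y) = w y * w y' := by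
      simp only [w, ← prod_mul_distrib]
      refine prod_congr rfl fun i _ => ?_
      by_cases hi : i ∈ s <;> simp [hi, mul_comm]
    have hfy : f (s.piecewise y y') = f y := hf fun i hi => by simp [show i ∈ s from hi]
    have hgy : g (s.piecewise y y') = g y' := hg fun i hi => by simp [show i ∉ s from hi]
    simp only [mix]
    rw [hfy, hgy]
    calc _ = w (s.piecewise y y') * w (s.piecewise y' y) * (f y * g y') := by ring
      _ = _ := by rw [hw]; ring
  calc _ = ∑ q : (ι → α) × (ι → α), w q.1 * f q.1 * (w q.2 * g q.2) := by
        rw [sum_mul_sum]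
        exact (Fintype.sum_prod_type' fun y y' => w y * f y * (w y' * g y')).symm
    _ = ∑ q : (ι → α) × (ι → α), w (mix q).1 * (f (mix q).1 * g (mix q).1) * w (mix q).2 :=
        (Fintype.sum_congr _ _ hmix).symm
    _ = ∑ q : (ι → α) × (ι → α), w q.1 * (f q.1 * g q.1) * w q.2 :=
        Equiv.sum_comp mix_involutive.toPerm (fun q => w q.1 * (f q.1 * g q.1) * w q.2)
    _ = _ := by
        rw [sum_mul_sum]; exact Fintype.sum_prod_type' fun y y' => w y * (f y * g y) * w y'

theorem dependsOn_piecewise {ι : Type*} {α : ι → Type*} (S : Finset ι)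
    [∀ i, Decidable (i ∈ S)] (f : ∀ i, α i) : DependsOn (fun g => S.piecewise f g) (↑S)ᶜ :=
  fun x y hxy => funext fun i => by
    by_cases hi : i ∈ S
    · simp [hi]
    · simp [hi, hxy i hi]

theorem min_le_mul_add_mul {R : Type*} [CommRing R] [LinearOrder R] [IsOrderedRing R]
    {a b p q : R} (hp : 0 ≤ p) (hq : 0 ≤ q) (hpq : p + q = 1) :
    min a b ≤ a * p + b * q := by
  have ha := mul_le_mul_of_nonneg_right (min_le_left a b) hp
  have hb := mul_le_mul_of_nonneg_right (min_le_right a b) hq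
  linear_combination ha + hb - min a b * hpq

section BiasedCube

variable {ι : Type*} [Fintype ι] {t : ℝ}

def biasedWeight (t : ℝ) (y : ι → Bool) : ℝ := ∏ i, if y i then t else 1 - t

theorem biasedWeight_nonneg (ht0 : 0 ≤ t) (ht1 : t ≤ 1) (y : ι → Bool) :
    0 ≤ biasedWeight t y :=
  prod_nonneg fun i _ => by split <;> linarith

variable [DecidableEq ι]

def biasedProb (t : ℝ) (E : (ι → Bool) → Prop) [DecidablePred E] : ℝ :=
  ∑ y, biasedWeight t y * if E y then 1 else 0

theorem sum_biasedWeight (t : ℝ) : ∑ y : ι → Bool, biasedWeight t y = 1 := by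
  simp only [biasedWeight]
  rw [← Fintype.prod_sum fun _ (b : Bool) => if b then t else 1 - t]
  simp

theorem biasedProb_nonneg (ht0 : 0 ≤ t) (ht1 : t ≤ 1) (E : (ι → Bool) → Prop) [DecidablePred E] :
    0 ≤ biasedProb t E :=
  sum_nonneg fun y _ => mul_nonneg (biasedWeight_nonneg ht0 ht1 y) (by split <;> norm_num)

theorem biasedProb_congr {E E' : (ι → Bool) → Prop} [DecidablePred E] [DecidablePred E']
    (h : ∀ y, E y ↔ E' y) : biasedProb t E = biasedProb t E' :=
  sum_congr rfl fun y _ => by simp only [h]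

theorem biasedProb_not (t : ℝ) (E : (ι → Bool) → Prop) [DecidablePred E] :
    biasedProb t (fun y => ¬E y) = ∑ y, biasedWeight t y * if E y then 0 else 1 :=
  sum_congr rfl fun y _ => by rw [ite_not]

theorem biasedProb_mono (ht0 : 0 ≤ t) (ht1 : t ≤ 1) {E E' : (ι → Bool) → Prop}
    [DecidablePred E] [DecidablePred E'] (h : ∀ y, E y → E' y) :
    biasedProb t E ≤ biasedProb t E' :=
  sum_le_sum fun y _ => mul_le_mul_of_nonneg_left
    (by split_ifs with hE hE' <;> simp_all) (biasedWeight_nonneg ht0 ht1 y)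

theorem biasedProb_and_add_biasedProb_and_not (t : ℝ) (E P : (ι → Bool) → Prop)
    [DecidablePred E] [DecidablePred P] :
    biasedProb t (fun y => E y ∧ P y) + biasedProb t (fun y => E y ∧ ¬P y) = biasedProb t E := by
  simp only [biasedProb, ← sum_add_distrib, ← mul_add]
  refine sum_congr rfl fun y _ => ?_
  by_cases hE : E y <;> by_cases hP : P y <;> simp [hE, hP]

theorem biasedProb_add_biasedProb_not (t : ℝ) (E : (ι → Bool) → Prop) [DecidablePred E] :
    biasedProb t E + biasedProb t (fun y => ¬E y) = 1 := by
  simpa [biasedProb, sum_biasedWeight] using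
    biasedProb_and_add_biasedProb_and_not t (fun _ => True) E

theorem biasedProb_exists_le_sum {κ : Type*} (ht0 : 0 ≤ t) (ht1 : t ≤ 1) (s : Finset κ)
    (E : κ → (ι → Bool) → Prop) [∀ j, DecidablePred (E j)] :
    biasedProb t (fun y => ∃ j ∈ s, E j y) ≤ ∑ j ∈ s, biasedProb t (E j) := by
  simp only [biasedProb]
  rw [sum_comm]
  refine sum_le_sum fun y _ => ?_
  rw [← mul_sum]
  refine mul_le_mul_of_nonneg_left ?_ (biasedWeight_nonneg ht0 ht1 y)
  split_ifs with h
  · obtain ⟨j, hj, hEj⟩ := h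
    exact (if_pos hEj).symm.le.trans
      (single_le_sum (f := fun j => if E j y then (1 : ℝ) else 0) (fun _ _ => by positivity) hj)
  · positivity

theorem biasedProb_and_of_dependsOn (t : ℝ) (s : Finset ι) {E E' : (ι → Bool) → Prop}
    [DecidablePred E] [DecidablePred E']
    (hE : DependsOn E (s : Set ι)) (hE' : DependsOn E' (↑s)ᶜ) :
    biasedProb t (fun y => E y ∧ E' y) = biasedProb t E * biasedProb t E' := by
  have h := sum_mul_sum_of_dependsOn (fun _ (b : Bool) => if b then t else 1 - t) s
    (f := fun y => if E y then (1 : ℝ) else 0) (g := fun y => if E' y then (1 : ℝ) else 0)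
    (fun x y hxy => by simp only [hE hxy]) (fun x y hxy => by simp only [hE' hxy])
  have hw : ∑ y : ι → Bool, ∏ i, (if y i then t else 1 - t) = 1 := sum_biasedWeight t
  rw [hw, mul_one] at h
  simp only [biasedProb, biasedWeight, h, ite_zero_mul_ite_zero, mul_one]

theorem biasedProb_apply_eq_true (t : ℝ) (j : ι) : biasedProb t (fun y => y j = true) = t := by
  have h : ∀ y : ι → Bool, biasedWeight t y * (if y j = true then 1 else 0) =
      ∏ i, (if y i then t else 1 - t) * if i = j then (if y i then 1 else 0) else 1 := by
    intro y
    rw [prod_mul_distrib, prod_ite_eq' univ j]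
    simp [biasedWeight]
  simp only [biasedProb, h]
  rw [← Fintype.prod_sum fun i (b : Bool) =>
    (if b then t else 1 - t) * if i = j then (if b then 1 else 0) else 1]
  simp

theorem sum_biasedProb_mem_le (ht0 : 0 ≤ t) (ht1 : t ≤ 1) (S : Finset ι)
    (T : (ι → Bool) → Finset ι) {r : ℕ} (hT : ∀ y, (T y).card ≤ r) :
    ∑ j ∈ S, biasedProb t (fun y => j ∈ T y) ≤ r := by
  simp only [biasedProb]
  rw [sum_comm]
  calc ∑ y, ∑ j ∈ S, biasedWeight t y * (if j ∈ T y then 1 else 0)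
      = ∑ y, biasedWeight t y * ((S.filter (· ∈ T y)).card : ℝ) := by
        simp only [← mul_sum, sum_boole]
    _ ≤ ∑ y, biasedWeight t y * r := sum_le_sum fun y _ =>
        mul_le_mul_of_nonneg_left
          (by exact_mod_cast (card_le_card fun j hj => (mem_filter.1 hj).2).trans (hT y))
          (biasedWeight_nonneg ht0 ht1 y)
    _ = r := by rw [← sum_mul, sum_biasedWeight, one_mul]

theorem min_biasedProb_sub_le_biasedProb_not_iff (ht0 : 0 ≤ t) (ht1 : t ≤ 1) (S : Finset ι)
    {A F G : (ι → Bool) → Prop} [DecidablePred A] [DecidablePred F] [DecidablePred G]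
    (hA : DependsOn A (S : Set ι)) (hG : DependsOn G (↑S)ᶜ) (hFG : ∀ y, ¬A y → (F y ↔ G y)) :
    min (biasedProb t fun y => ¬A y) (biasedProb t A) - biasedProb t (fun y => ¬G y ∧ F y) ≤
      biasedProb t fun y => ¬(A y ↔ F y) := by
  have hsplit : biasedProb t (fun y => ¬(A y ↔ F y)) =
      biasedProb t (fun y => A y ∧ ¬F y) + biasedProb t (fun y => ¬A y ∧ G y) := by
    rw [← biasedProb_and_add_biasedProb_and_not t (fun y => ¬(A y ↔ F y)) A]
    congr 1 <;> refine biasedProb_congr fun y => ?_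
    · tauto
    · by_cases hy : A y
      · simp [hy]
      · simp [hy, hFG y hy]
  have hbad : biasedProb t (fun y => A y ∧ ¬G y) ≤
      biasedProb t (fun y => A y ∧ ¬F y) + biasedProb t (fun y => ¬G y ∧ F y) := by
    rw [← biasedProb_and_add_biasedProb_and_not t (fun y => A y ∧ ¬G y) F, add_comm]
    exact add_le_add (biasedProb_mono ht0 ht1 fun y h => ⟨h.1.1, h.2⟩)
      (biasedProb_mono ht0 ht1 fun y h => ⟨h.1.2, h.2⟩)
  have hindep₁ : biasedProb t (fun y => ¬A y ∧ G y) =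
      biasedProb t (fun y => ¬A y) * biasedProb t G :=
    biasedProb_and_of_dependsOn t S (fun x y hxy => by rw [hA hxy]) hG
  have hindep₂ : biasedProb t (fun y => A y ∧ ¬G y) =
      biasedProb t A * biasedProb t (fun y => ¬G y) :=
    biasedProb_and_of_dependsOn t S hA (fun x y hxy => by rw [hG hxy])
  have hmin := min_le_mul_add_mul (a := biasedProb t fun y => ¬A y) (b := biasedProb t A)
    (biasedProb_nonneg ht0 ht1 G) (biasedProb_nonneg ht0 ht1 _) (biasedProb_add_biasedProb_not t G)
  linarith

end BiasedCube

section CNF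

variable {ι : Type*}

/-- The clause `(P, N)` is the disjunction of the variables in `P` and the negated variables
in `N`. -/
def SatisfiesClause (x : ι → Bool) (c : Finset ι × Finset ι) : Prop :=
  (∃ i ∈ c.1, x i = true) ∨ ∃ i ∈ c.2, x i = false

def SatisfiesCNF (x : ι → Bool) (clauses : Finset (Finset ι × Finset ι)) : Prop :=
  ∀ c ∈ clauses, SatisfiesClause x c

instance (x : ι → Bool) (c : Finset ι × Finset ι) : Decidable (SatisfiesClause x c) := by
  unfold SatisfiesClause; infer_instance

instance (x : ι → Bool) (clauses : Finset (Finset ι × Finset ι)) :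
    Decidable (SatisfiesCNF x clauses) := by
  unfold SatisfiesCNF; infer_instance

variable [DecidableEq ι]

theorem SatisfiesClause.exists_mem_of_not_satisfiesClause_piecewise {x : ι → Bool}
    {c : Finset ι × Finset ι} {S : Finset ι} (hx : SatisfiesClause x c)
    (hS : ¬SatisfiesClause (S.piecewise (fun _ => false) x) c) :
    ∃ j ∈ S, j ∈ c.1 ∧ x j = true := by
  simp only [SatisfiesClause, not_or, not_exists, not_and, Bool.not_eq_true,
    Bool.not_eq_false] at hS
  rcases hx with ⟨i, hi, hxi⟩ | ⟨i, hi, hxi⟩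
  · by_cases hiS : i ∈ S
    · exact ⟨i, hiS, hi, hxi⟩
    · simpa [hiS, hxi] using hS.1 i hi
  · by_cases hiS : i ∈ S <;> simpa [hiS, hxi] using hS.2 i hi

variable [Fintype ι] {t : ℝ}

theorem biasedProb_not_satisfiesCNF_piecewise_and_satisfiesCNF_le (ht0 : 0 ≤ t) (ht1 : t ≤ 1)
    {clauses : Finset (Finset ι × Finset ι)} {r : ℕ} (hwidth : ∀ c ∈ clauses, c.1.card ≤ r)
    (S : Finset ι) :
    biasedProb t (fun y => ¬SatisfiesCNF (S.piecewise (fun _ => false) y) clauses ∧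
      SatisfiesCNF y clauses) ≤ r * t := by
  have hclause : ∀ x : ι → Bool, ∃ c : Finset ι × Finset ι,
      c.1.card ≤ r ∧ (¬SatisfiesCNF x clauses → c ∈ clauses ∧ ¬SatisfiesClause x c) := by
    intro x
    by_cases hx : SatisfiesCNF x clauses
    · exact ⟨(∅, ∅), by simp, fun h => (h hx).elim⟩
    · obtain ⟨c, hc, hxc⟩ : ∃ c ∈ clauses, ¬SatisfiesClause x c := by
        simpa [SatisfiesCNF] using hx
      exact ⟨c, hwidth c hc, fun _ => ⟨hc, hxc⟩⟩
  choose falsified hfalsified_card hfalsified using hclause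
  set z : (ι → Bool) → ι → Bool := fun y => S.piecewise (fun _ => false) y
  have hz : DependsOn z (↑S)ᶜ := dependsOn_piecewise S _
  calc biasedProb t _
      ≤ biasedProb t (fun y => ∃ j ∈ S, j ∈ (falsified (z y)).1 ∧ y j = true) :=
        biasedProb_mono ht0 ht1 fun y ⟨hzy, hy⟩ =>
          have ⟨hmem, hfalse⟩ := hfalsified _ hzy
          (hy _ hmem).exists_mem_of_not_satisfiesClause_piecewise hfalse
    _ ≤ ∑ j ∈ S, biasedProb t (fun y => j ∈ (falsified (z y)).1 ∧ y j = true) :=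
        biasedProb_exists_le_sum ht0 ht1 S _
    _ = ∑ j ∈ S, biasedProb t (fun y => j ∈ (falsified (z y)).1) * t := by
        refine sum_congr rfl fun j hj => ?_
        -- the clause is chosen from `z y`, which does not see the coordinate `j ∈ S`
        rw [biasedProb_and_of_dependsOn t {j}ᶜ, biasedProb_apply_eq_true]
        · have hsub : ((S : Set ι))ᶜ ⊆ ↑({j}ᶜ : Finset ι) := by simpa using hj
          exact fun x y hxy => by simp only [hz.mono hsub hxy]
        · exact fun x y hxy => by rw [hxy j (by simp)]
    _ = (∑ j ∈ S, biasedProb t (fun y => j ∈ (falsified (z y)).1)) * t := (sum_mul _ _ _).symm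
    _ ≤ r * t := mul_le_mul_of_nonneg_right
        (sum_biasedProb_mem_le ht0 ht1 S _ fun y => hfalsified_card (z y)) ht0


theorem min_biasedProb_sub_le_biasedProb_not_iff_satisfiesCNF (ht0 : 0 ≤ t) (ht1 : t ≤ 1)
    {clauses : Finset (Finset ι × Finset ι)} {r : ℕ} (hwidth : ∀ c ∈ clauses, c.1.card ≤ r)
    (S : Finset ι) :
    min (biasedProb t fun y => ¬∃ i ∈ S, y i = true) (biasedProb t fun y => ∃ i ∈ S, y i = true)
        - r * t ≤
      biasedProb t fun y => ¬((∃ i ∈ S, y i = true) ↔ SatisfiesCNF y clauses) := by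
  have hA : DependsOn (fun y : ι → Bool => ∃ i ∈ S, y i = true) (S : Set ι) :=
    fun x y hxy => propext <| exists_congr fun i => and_congr_right fun hi => by rw [hxy i hi]
  have hFG : ∀ y : ι → Bool, ¬(∃ i ∈ S, y i = true) →
      (SatisfiesCNF y clauses ↔ SatisfiesCNF (S.piecewise (fun _ => false) y) clauses) := by
    intro y hy
    simp only [not_exists, not_and, Bool.not_eq_true] at hy
    rw [(piecewise_congr S (fun i hi => (hy i hi).symm) fun _ _ => rfl).trans (piecewise_same S y)]
  have key := min_biasedProb_sub_le_biasedProb_not_iff ht0 ht1 S hA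
    (fun x y hxy => by simp only [dependsOn_piecewise S _ hxy]) hFG
  linarith [biasedProb_not_satisfiesCNF_piecewise_and_satisfiesCNF_le ht0 ht1 hwidth S (t := t)]

end CNF

theorem stmt_5_general (w₀ r : ℕ) (t : ℝ) (ht0 : 0 ≤ t) (ht1 : t ≤ 1)
    (clauses : Finset (Finset (Fin w₀) × Finset (Fin w₀)))
    (hwidth : ∀ c ∈ clauses, c.1.card + c.2.card ≤ r)
    (S : Finset (Fin w₀)) :
    (∑ y : Fin w₀ → Bool, (∏ i, if y i then t else 1 - t) *
        (if ((∃ i ∈ S, y i = true) ↔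
              (∀ c ∈ clauses, (∃ i ∈ c.1, y i = true) ∨ (∃ i ∈ c.2, y i = false)))
          then 0 else 1))
    ≥ min
        (∑ y : Fin w₀ → Bool, (∏ i, if y i then t else 1 - t) *
          (if ∃ i ∈ S, y i = true then 0 else 1))
        (∑ y : Fin w₀ → Bool, (∏ i, if y i then t else 1 - t) *
          (if ∃ i ∈ S, y i = true then 1 else 0))
      - r * t := by
  have key := min_biasedProb_sub_le_biasedProb_not_iff_satisfiesCNF ht0 ht1
    (fun c hc => (Nat.le_add_right _ _).trans (hwidth c hc)) S
  rw [biasedProb_not, biasedProb_not] at key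
  simp only [biasedProb, biasedWeight, SatisfiesCNF, SatisfiesClause] at key
  -- the two sides differ only in their `Decidable` instances
  convert key
  congr 1

/-- Proposition 11.1: Let `F` be a CNF of width at most `r` on `{0,1}^{w₀}`
(given by a finite set of clauses, each a pair of a set of positive literals
and a set of negative literals of total size at most `r`), let `S` be the
nonempty set of `*`-coordinates of a restriction `τ ∈ {0,*}^{w₀}`, and let
`Y` be `t`-biased product-distributed.  Then
`Pr[(OR ↾ τ)(Y) ≠ F(Y)] ≥ min{Pr[(OR ↾ τ)(Y) = 0], Pr[(OR ↾ τ)(Y) = 1]} − r·t`. -/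
theorem stmt_5 (w₀ r : ℕ) (t : ℝ) (ht0 : 0 ≤ t) (ht1 : t ≤ 1)
    (clauses : Finset (Finset (Fin w₀) × Finset (Fin w₀)))
    (hwidth : ∀ c ∈ clauses, c.1.card + c.2.card ≤ r)
    (S : Finset (Fin w₀)) (hS : S.Nonempty) :
    (∑ y : Fin w₀ → Bool, (∏ i, if y i then t else 1 - t) *
        (if ((∃ i ∈ S, y i = true) ↔
              (∀ c ∈ clauses, (∃ i ∈ c.1, y i = true) ∨ (∃ i ∈ c.2, y i = false)))
          then 0 else 1))
    ≥ min
        (∑ y : Fin w₀ → Bool, (∏ i, if y i then t else 1 - t) *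
          (if ∃ i ∈ S, y i = true then 0 else 1))
        (∑ y : Fin w₀ → Bool, (∏ i, if y i then t else 1 - t) *
          (if ∃ i ∈ S, y i = true then 1 else 0))
      - r * t :=
  stmt_5_general w₀ r t ht0 ht1 clauses hwidth S
end

section
/- Fix reals p, q, λ, m with p = 2^{-m}, q = 2^{-m/2} = √p, λ = (log w)^{3/2}/w^{5/4} where w = ⌊m·2^m/log₂(e)⌋, and define t_{d-1} = (p-λ)/q and recursively t_{k-1} = ((1-t_k)^{qw} - λ)/q for k = d-1 down to 2. Then there is a universal constant c > 0 such that for all 2 ≤ d ≤ c·m/log m and all k ∈ [d-1], the inequality |t_k·q - p| ≤ (2m)^{d-1-k}·λ holds, and consequently t_k = q ± q^{1.1}. -/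
open Real

lemma aux_exp_le {x : ℝ} (h0 : 0 ≤ x) (h1 : x ≤ 1/2) : Real.exp x ≤ 1 + 2*x := by
  have h2 := Real.add_one_le_exp (-x)
  rw [Real.exp_neg] at h2
  have h3 := Real.exp_pos x
  have h4 : (1 - x) * Real.exp x ≤ 1 := by
    have := mul_le_mul_of_nonneg_right h2 h3.le
    rw [inv_mul_cancel₀ h3.ne'] at this
    nlinarith
  nlinarith

lemma aux_exp_ge {t : ℝ} (h0 : 0 ≤ t) (h1 : t ≤ 1/2) : Real.exp (-(t + 2*t^2)) ≤ 1 - t := by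
  have h2 := Real.add_one_le_exp (t + 2*t^2)
  have h3 := Real.exp_pos (t + 2*t^2)
  rw [Real.exp_neg, inv_eq_one_div, div_le_iff₀ h3]
  nlinarith

lemma aux_rpow_le {a b : ℝ} (h : a ≤ b) : (2:ℝ)^a ≤ (2:ℝ)^b :=
  Real.rpow_le_rpow_of_exponent_le (by norm_num) h

lemma aux_sq_le {M : ℝ} (hM : 20000 ≤ M) : 4*M^2 ≤ (2:ℝ)^(M/50) := by
  have hM0 : (0:ℝ) < M := by linarith
  set u := M ^ ((1:ℝ)/4) with hu_def
  have hu0 : 0 < u := Real.rpow_pos_of_pos hM0 _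
  have hlogM : Real.log M ≤ 4 * u := by
    have h1 := Real.log_le_sub_one_of_pos hu0
    rw [hu_def, Real.log_rpow hM0] at h1
    nlinarith
  have hM4 : M = u^(4:ℕ) := by
    rw [hu_def, ← Real.rpow_natCast (M ^ ((1:ℝ)/4)) 4, ← Real.rpow_mul hM0.le]
    norm_num
  have hu10 : (10:ℝ) ≤ u := by
    have h1 : ((10:ℝ))^(4:ℕ) ≤ u^(4:ℕ) := by rw [← hM4]; norm_num; linarith
    by_contra h
    push_neg at h
    have := pow_lt_pow_left₀ h hu0.le (show 4 ≠ 0 by norm_num)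
    linarith
  have hkey : Real.log (4*M^2) ≤ Real.log 2 * (M/50) := by
    rw [Real.log_mul (by norm_num) (by positivity), show (4:ℝ) = 2^(2:ℕ) by norm_num,
      Real.log_pow, Real.log_pow]
    have hl2a := Real.log_two_lt_d9
    have hl2b := Real.log_two_gt_d9
    have h1000 : 1000 * u ≤ u^(4:ℕ) := by
      have h3 := pow_le_pow_left₀ (show (0:ℝ) ≤ 10 by norm_num) hu10 3
      nlinarith
    push_cast
    nlinarith [hM4]
  calc 4*M^2 = Real.exp (Real.log (4*M^2)) := by rw [Real.exp_log (by positivity)]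
    _ ≤ Real.exp (Real.log 2 * (M/50)) := Real.exp_le_exp.mpr hkey
    _ = (2:ℝ)^(M/50) := by rw [← Real.rpow_def_of_pos (by norm_num)]

set_option maxHeartbeats 1000000 in
lemma step_bound (M p q w lam t E : ℝ)
    (hM : 20000 ≤ M)
    (hp : p = (2:ℝ)^(-M)) (hq : q = (2:ℝ)^(-M/2))
    (hw0 : 0 ≤ w)
    (hwp1 : w * p ≤ M * Real.log 2) (hwp2 : M * Real.log 2 - p ≤ w * p)
    (hlam_lo : (2:ℝ)^(-(5/4*M)) ≤ lam)
    (hlamE : lam ≤ E) (hE2 : E ≤ (2:ℝ)^(-(11/10*M)))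
    (hwE : w * E ≤ 1/4)
    (ht : |t * q - p| ≤ E) :
    |(1 - t)^(q*w) - lam - p| ≤ 2*M*E := by
  have hq0 : 0 < q := by rw [hq]; positivity
  have hp0 : 0 < p := by rw [hp]; positivity
  have hlam0 : 0 < lam := lt_of_lt_of_le (by positivity) hlam_lo
  have hE0 : 0 < E := lt_of_lt_of_le hlam0 hlamE
  have hpq : p = q^2 := by
    rw [hp, hq, ← Real.rpow_natCast ((2:ℝ)^(-M/2)) 2, ← Real.rpow_mul (by norm_num)]
    norm_num
  have hEp : E ≤ p := by
    refine hE2.trans ?_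
    rw [hp]; exact aux_rpow_le (by linarith)
  have habs := abs_le.mp ht
  have ht0 : 0 ≤ t := by
    have htq : 0 ≤ t * q := by linarith
    have h : t = (t*q)/q := by field_simp
    rw [h]; exact div_nonneg htq hq0.le
  have ht2q : t ≤ 2*q := by
    have h1 : t * q ≤ (2*q) * q := by nlinarith
    exact le_of_mul_le_mul_right h1 hq0
  have hq8 : q ≤ 1/8 := by
    rw [hq]
    calc (2:ℝ)^(-M/2) ≤ (2:ℝ)^((-3:ℤ):ℝ) := aux_rpow_le (by push_cast; linarith)
      _ = 1/8 := by rw [Real.rpow_intCast]; norm_num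
  have ht_half : t ≤ 1/2 := by linarith
  have h1t0 : 0 < 1 - t := by linarith
  have hqw0 : 0 ≤ q * w := mul_nonneg hq0.le hw0
  have hl2a := Real.log_two_lt_d9
  have hl2b := Real.log_two_gt_d9
  have hpexp : p = Real.exp (Real.log 2 * (-M)) := by
    rw [hp, Real.rpow_def_of_pos (by norm_num)]
  have hwp07 : w * p ≤ 0.7 * M := by nlinarith
  have hp4 : p ≤ 1/4 := by
    rw [hp]
    calc (2:ℝ)^(-M) ≤ (2:ℝ)^((-2:ℤ):ℝ) := aux_rpow_le (by push_cast; linarith)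
      _ = 1/4 := by rw [Real.rpow_intCast]; norm_num
  have h2p2 : 2*p^2 ≤ lam := by
    refine le_trans ?_ hlam_lo
    have h : 2*p^2 = (2:ℝ)^(1 + (-M + -M)) := by
      rw [Real.rpow_add (by norm_num), Real.rpow_add (by norm_num), Real.rpow_one, ← hp]; ring
    rw [h]; exact aux_rpow_le (by linarith)
  have h6pq : 6*(p*q) ≤ E := by
    refine le_trans ?_ (hlam_lo.trans hlamE)
    have h1 : p*q = (2:ℝ)^(-M + -M/2) := by rw [Real.rpow_add (by norm_num), hp, hq]
    have h2 : 6*(p*q) ≤ (2:ℝ)^(3 + (-M + -M/2)) := by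
      rw [Real.rpow_add (by norm_num) 3, ← h1]
      have h8 : (2:ℝ)^(3:ℝ) = 8 := by
        rw [show (3:ℝ) = ((3:ℕ):ℝ) by norm_num, Real.rpow_natCast]; norm_num
      rw [h8]
      nlinarith [Real.rpow_pos_of_pos (show (0:ℝ)<2 by norm_num) (-M + -M/2)]
    exact h2.trans (aux_rpow_le (by linarith))
  have hmulE : -((t*q - p)*w) ≤ E*w := by
    have := mul_le_mul_of_nonneg_right (show -(t*q - p) ≤ E by linarith) hw0
    linarith
  have hmulE2 : -(E*w) ≤ (t*q - p)*w := by
    have := mul_le_mul_of_nonneg_right (show -E ≤ t*q - p by linarith) hw0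
    linarith
  have hmulE3 : (t*q - p)*w ≤ E*w :=
    mul_le_mul_of_nonneg_right habs.2 hw0
  -- upper bound
  have hub : (1 - t)^(q*w) ≤ p * (1 + 2*(p + w*E)) := by
    have h1 : (1-t)^(q*w) ≤ (Real.exp (-t))^(q*w) :=
      Real.rpow_le_rpow h1t0.le (by linarith [Real.add_one_le_exp (-t)]) hqw0
    have h2 : (Real.exp (-t))^(q*w) = Real.exp (-(t*q)*w) := by
      rw [← Real.exp_mul]; ring_nf
    have h4 : Real.exp (-(t*q)*w) ≤ p * Real.exp (p + w*E) := by
      have h3 : -(t*q)*w = Real.log 2 * (-M) + ((M*Real.log 2 - w*p) + (-((t*q - p)*w))) := by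
        ring
      rw [h3, Real.exp_add, ← hpexp]
      have h5 : (M*Real.log 2 - w*p) + (-((t*q - p)*w)) ≤ p + w*E := by
        have : E*w = w*E := mul_comm _ _
        linarith
      exact mul_le_mul_of_nonneg_left (Real.exp_le_exp.mpr h5) hp0.le
    have h7 : Real.exp (p + w*E) ≤ 1 + 2*(p + w*E) := by
      apply aux_exp_le
      · positivity
      · linarith
    calc (1-t)^(q*w) ≤ Real.exp (-(t*q)*w) := h2 ▸ h1
      _ ≤ p * Real.exp (p + w*E) := h4
      _ ≤ p * (1 + 2*(p + w*E)) := mul_le_mul_of_nonneg_left h7 hp0.le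
  -- lower bound
  have hlb : p * (1 - (w*E + 6*q*M)) ≤ (1 - t)^(q*w) := by
    have h1 : (Real.exp (-(t + 2*t^2)))^(q*w) ≤ (1-t)^(q*w) :=
      Real.rpow_le_rpow (Real.exp_pos _).le (aux_exp_ge ht0 ht_half) hqw0
    have h2 : (Real.exp (-(t + 2*t^2)))^(q*w) = Real.exp (-(t + 2*t^2)*(q*w)) := by
      rw [← Real.exp_mul]
    have h3 : Real.log 2 * (-M) + (-(w*E + 6*q*M)) ≤ -(t + 2*t^2)*(q*w) := by
      have e1 : -(t + 2*t^2)*(q*w) =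
          Real.log 2 * (-M) + ((M*Real.log 2 - w*p) + ((-((t*q - p)*w)) + (-(2*t^2*(q*w))))) := by
        ring
      have h7 : 2*t^2*(q*w) ≤ 6*q*M := by
        have h8 : t^2 ≤ 4*q^2 := by nlinarith
        have h9 : 2*t^2*(q*w) ≤ 8*q^2*(q*w) := by nlinarith
        have h10 : 8*q^2*(q*w) = 8*q*(w*p) := by rw [hpq]; ring
        have h11 : 8*q*(w*p) ≤ 8*q*(0.7*M) := by
          apply mul_le_mul_of_nonneg_left hwp07 (by positivity)
        nlinarith
      rw [e1]
      have : E*w = w*E := mul_comm _ _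
      linarith
    have h4 : p * Real.exp (-(w*E + 6*q*M)) ≤ Real.exp (-(t + 2*t^2)*(q*w)) := by
      rw [hpexp, ← Real.exp_add]
      exact Real.exp_le_exp.mpr h3
    have h5 : 1 - (w*E + 6*q*M) ≤ Real.exp (-(w*E + 6*q*M)) := by
      linarith [Real.add_one_le_exp (-(w*E + 6*q*M))]
    calc p * (1 - (w*E + 6*q*M)) ≤ p * Real.exp (-(w*E + 6*q*M)) :=
          mul_le_mul_of_nonneg_left h5 hp0.le
      _ ≤ Real.exp (-(t + 2*t^2)*(q*w)) := h4
      _ ≤ (1-t)^(q*w) := by rw [← h2]; exact h1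
  -- combine
  rw [abs_le]
  constructor
  · have e_low : p * (1 - (w*E + 6*q*M)) - lam - p = -((w*p)*E) - (6*(p*q))*M - lam := by
      ring
    have b1 : (w*p)*E ≤ (0.7*M)*E := mul_le_mul_of_nonneg_right hwp07 hE0.le
    have b2 : (6*(p*q))*M ≤ E*M := mul_le_mul_of_nonneg_right h6pq (by linarith)
    have b3 : lam ≤ 0.3*(M*E) := by nlinarith
    nlinarith [hlb]
  · have e_up : p * (1 + 2*(p + w*E)) - lam - p = 2*p^2 + 2*((w*p)*E) - lam := by ring
    have b1 : (w*p)*E ≤ (0.7*M)*E := mul_le_mul_of_nonneg_right hwp07 hE0.le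
    nlinarith [hub]

set_option maxHeartbeats 2000000 in
/-- Lemma 6.1: with `p = 2^{-m}`, `q = 2^{-m/2}`,
`w = ⌊m·2^m / log₂ e⌋`, `λ = (log₂ w)^{3/2} / w^{5/4}`, and the sequence
`t_{d-1} = (p-λ)/q`, `t_{k-1} = ((1-t_k)^{qw} - λ)/q`, there is a universal
constant `c > 0` such that for all `2 ≤ d ≤ c·m/log m` and all `k ∈ [d-1]`,
`|t_k·q - p| ≤ (2m)^{d-1-k}·λ` and `t_k = q ± q^{1.1}`. -/
theorem stmt_10 : ∃ c : ℝ, 0 < c ∧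
    ∀ (m d : ℕ) (t : ℕ → ℝ) (p q w lam : ℝ),
      2 ≤ m →
      p = (2 : ℝ) ^ (-(m : ℝ)) →
      q = (2 : ℝ) ^ (-(m : ℝ) / 2) →
      w = (⌊(m : ℝ) * (2 : ℝ) ^ (m : ℝ) / Real.logb 2 (Real.exp 1)⌋₊ : ℝ) →
      lam = (Real.logb 2 w) ^ ((3 : ℝ) / 2) / w ^ ((5 : ℝ) / 4) →
      t (d - 1) = (p - lam) / q →
      (∀ k, 2 ≤ k → k ≤ d - 1 → t (k - 1) = ((1 - t k) ^ (q * w) - lam) / q) →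
      2 ≤ d → (d : ℝ) ≤ c * m / Real.logb 2 m →
      ∀ k, 1 ≤ k → k ≤ d - 1 →
        |t k * q - p| ≤ (2 * (m : ℝ)) ^ (d - 1 - k) * lam ∧
        |t k - q| ≤ q ^ ((1.1 : ℝ)) := by
  refine ⟨1/1000, by norm_num, ?_⟩
  intro m d t p q w lam hm hp hq hw hlam htd hrec hd2 hdle
  set M : ℝ := (m:ℝ) with hM_def
  have hM2 : (2:ℝ) ≤ M := by rw [hM_def]; exact_mod_cast hm
  have hlogb1 : 1 ≤ Real.logb 2 M := by
    rw [← Real.logb_self_eq_one (b := 2) (by norm_num)]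
    exact Real.logb_le_logb_of_le (by norm_num) (by norm_num) hM2
  have hlogb0 : 0 < Real.logb 2 M := by linarith
  have hd2' : (2:ℝ) ≤ (d:ℝ) := by exact_mod_cast hd2
  have hdlog : (d:ℝ) * Real.logb 2 M ≤ M/1000 := by
    have h1 := (le_div_iff₀ hlogb0).mp hdle
    calc (d:ℝ) * Real.logb 2 M ≤ 1/1000 * M := h1
      _ = M/1000 := by ring
  have hM2000 : 2000 ≤ M := by
    have h1 : (2:ℝ)*1 ≤ (d:ℝ) * Real.logb 2 M :=
      mul_le_mul hd2' hlogb1 (by norm_num) (by linarith)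
    linarith
  have hlogb10 : 10 ≤ Real.logb 2 M := by
    have h1 : ((2:ℝ)^(10:ℝ)) = 1024 := by
      rw [show (10:ℝ) = ((10:ℕ):ℝ) by norm_num, Real.rpow_natCast]; norm_num
    calc (10:ℝ) = Real.logb 2 ((2:ℝ)^(10:ℝ)) := by
          rw [Real.logb_rpow (by norm_num) (by norm_num)]
      _ ≤ Real.logb 2 M := by
          rw [h1]
          exact Real.logb_le_logb_of_le (by norm_num) (by norm_num) (by linarith)
  have hM : 20000 ≤ M := by
    have h1 : (2:ℝ)*10 ≤ (d:ℝ) * Real.logb 2 M :=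
      mul_le_mul hd2' hlogb10 (by norm_num) (by linarith)
    linarith
  have hM0 : (0:ℝ) < M := by linarith
  have hq0 : 0 < q := by rw [hq]; positivity
  have hp0 : 0 < p := by rw [hp]; positivity
  have hpq : p = q^2 := by
    rw [hp, hq, ← Real.rpow_natCast ((2:ℝ)^(-M/2)) 2, ← Real.rpow_mul (by norm_num)]
    norm_num
  have hl2a := Real.log_two_lt_d9
  have hl2b := Real.log_two_gt_d9
  -- w facts
  have h2M1 : (1:ℝ) ≤ (2:ℝ)^M := by
    rw [show (1:ℝ) = (2:ℝ)^(0:ℝ) by rw [Real.rpow_zero]]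
    exact aux_rpow_le (by linarith)
  have h2M0 : (0:ℝ) < (2:ℝ)^M := by positivity
  have harg : M * (2:ℝ)^M / Real.logb 2 (Real.exp 1) = M * (2:ℝ)^M * Real.log 2 := by
    rw [Real.logb, Real.log_exp]
    field_simp
  have hwX : w = (⌊M * (2:ℝ)^M * Real.log 2⌋₊ : ℝ) := by rw [hw, harg]
  have hX0 : (0:ℝ) ≤ M * (2:ℝ)^M * Real.log 2 := by positivity
  have hw_leX : w ≤ M * (2:ℝ)^M * Real.log 2 := by rw [hwX]; exact Nat.floor_le hX0
  have hw_gtX : M * (2:ℝ)^M * Real.log 2 - 1 < w := by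
    rw [hwX]; linarith [Nat.lt_floor_add_one (M * (2:ℝ)^M * Real.log 2)]
  have hw_le : w ≤ M * (2:ℝ)^M := by
    have h1 : M * (2:ℝ)^M * Real.log 2 ≤ M * (2:ℝ)^M * 1 :=
      mul_le_mul_of_nonneg_left (by linarith) (by positivity)
    linarith
  have hw_ge : (2:ℝ)^M ≤ w := by
    have h1 : (2:ℝ) ≤ M * Real.log 2 := by nlinarith
    have h2 : (2:ℝ)^M * 2 ≤ (2:ℝ)^M * (M * Real.log 2) :=
      mul_le_mul_of_nonneg_left h1 h2M0.le
    have h3 : (2:ℝ)^M * (M * Real.log 2) = M * (2:ℝ)^M * Real.log 2 := by ring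
    linarith
  have hw0 : (0:ℝ) ≤ w := by linarith
  have hw_pos : (0:ℝ) < w := by linarith
  -- w*p facts
  have hcancel : (2:ℝ)^M * (2:ℝ)^(-M) = 1 := by
    rw [← Real.rpow_add (by norm_num)]; simp
  have hXp : (M * (2:ℝ)^M * Real.log 2) * p = M * Real.log 2 := by
    rw [hp, show M * (2:ℝ)^M * Real.log 2 * (2:ℝ)^(-M)
      = M * Real.log 2 * ((2:ℝ)^M * (2:ℝ)^(-M)) from by ring, hcancel, mul_one]
  have hwp1 : w * p ≤ M * Real.log 2 := by
    calc w * p ≤ (M * (2:ℝ)^M * Real.log 2) * p := mul_le_mul_of_nonneg_right hw_leX hp0.le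
      _ = M * Real.log 2 := hXp
  have hwp2 : M * Real.log 2 - p ≤ w * p := by
    have h1 : (M * (2:ℝ)^M * Real.log 2 - 1) * p ≤ w * p :=
      mul_le_mul_of_nonneg_right hw_gtX.le hp0.le
    calc M * Real.log 2 - p = (M * (2:ℝ)^M * Real.log 2 - 1) * p := by
          rw [sub_mul, hXp, one_mul]
      _ ≤ w * p := h1
  -- logb 2 w facts
  have hlogbw_lo : M ≤ Real.logb 2 w := by
    calc M = Real.logb 2 ((2:ℝ)^M) := (Real.logb_rpow (by norm_num) (by norm_num)).symm
      _ ≤ Real.logb 2 w := Real.logb_le_logb_of_le (by norm_num) h2M0 hw_ge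
  have hM50 : M ≤ (2:ℝ)^(M/50) := by
    have h1 : M ≤ 4*M^2 := by nlinarith
    linarith [aux_sq_le hM]
  have hlogbw_hi : Real.logb 2 w ≤ 2*M := by
    have h1 : w ≤ (2:ℝ)^(2*M) := by
      calc w ≤ M * (2:ℝ)^M := hw_le
        _ ≤ (2:ℝ)^(M/50) * (2:ℝ)^M := mul_le_mul_of_nonneg_right hM50 h2M0.le
        _ = (2:ℝ)^(M/50 + M) := (Real.rpow_add (by norm_num) _ _).symm
        _ ≤ (2:ℝ)^(2*M) := aux_rpow_le (by linarith)
    calc Real.logb 2 w ≤ Real.logb 2 ((2:ℝ)^(2*M)) :=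
          Real.logb_le_logb_of_le (by norm_num) hw_pos h1
      _ = 2*M := Real.logb_rpow (by norm_num) (by norm_num)
  -- lam bounds
  have hden_pos : (0:ℝ) < w ^ ((5:ℝ)/4) := Real.rpow_pos_of_pos hw_pos _
  have hnum_pos : (0:ℝ) < (Real.logb 2 w) ^ ((3:ℝ)/2) :=
    Real.rpow_pos_of_pos (by linarith) _
  have hlam0 : 0 < lam := by rw [hlam]; positivity
  have hlam_up : lam ≤ (2:ℝ)^(-(9/8*M)) := by
    have hnum : (Real.logb 2 w) ^ ((3:ℝ)/2) ≤ (2:ℝ)^(M/50) := by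
      calc (Real.logb 2 w) ^ ((3:ℝ)/2) ≤ (2*M) ^ ((3:ℝ)/2) :=
            Real.rpow_le_rpow (by linarith) hlogbw_hi (by norm_num)
        _ ≤ (2*M) ^ ((2:ℕ):ℝ) :=
            Real.rpow_le_rpow_of_exponent_le (by linarith) (by norm_num)
        _ = 4*M^2 := by rw [Real.rpow_natCast]; ring
        _ ≤ (2:ℝ)^(M/50) := aux_sq_le hM
    have hden : (2:ℝ)^(M*(5/4)) ≤ w ^ ((5:ℝ)/4) := by
      calc (2:ℝ)^(M*(5/4)) = ((2:ℝ)^M) ^ ((5:ℝ)/4) := Real.rpow_mul (by norm_num) _ _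
        _ ≤ w ^ ((5:ℝ)/4) := Real.rpow_le_rpow h2M0.le hw_ge (by norm_num)
    calc lam ≤ (2:ℝ)^(M/50) / (2:ℝ)^(M*(5/4)) := by
          rw [hlam]
          exact div_le_div₀ (by positivity) hnum (by positivity) hden
      _ = (2:ℝ)^(M/50 - M*(5/4)) := (Real.rpow_sub (by norm_num) _ _).symm
      _ ≤ (2:ℝ)^(-(9/8*M)) := aux_rpow_le (by linarith)
  have hlam_lo : (2:ℝ)^(-(5/4*M)) ≤ lam := by
    have hnum : M ^ ((3:ℝ)/2) ≤ (Real.logb 2 w) ^ ((3:ℝ)/2) :=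
      Real.rpow_le_rpow hM0.le hlogbw_lo (by norm_num)
    have hden : w ^ ((5:ℝ)/4) ≤ M ^ ((3:ℝ)/2) * (2:ℝ)^(M*(5/4)) := by
      calc w ^ ((5:ℝ)/4) ≤ (M * (2:ℝ)^M) ^ ((5:ℝ)/4) :=
            Real.rpow_le_rpow hw0 hw_le (by norm_num)
        _ = M ^ ((5:ℝ)/4) * ((2:ℝ)^M) ^ ((5:ℝ)/4) :=
            Real.mul_rpow hM0.le h2M0.le
        _ ≤ M ^ ((3:ℝ)/2) * ((2:ℝ)^M) ^ ((5:ℝ)/4) := by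
            apply mul_le_mul_of_nonneg_right _ (by positivity)
            exact Real.rpow_le_rpow_of_exponent_le (by linarith) (by norm_num)
        _ = M ^ ((3:ℝ)/2) * (2:ℝ)^(M*(5/4)) := by
            rw [← Real.rpow_mul (by norm_num)]
    have hMnum_pos : (0:ℝ) < M ^ ((3:ℝ)/2) := Real.rpow_pos_of_pos hM0 _
    calc (2:ℝ)^(-(5/4*M)) = M ^ ((3:ℝ)/2) / (M ^ ((3:ℝ)/2) * (2:ℝ)^(M*(5/4))) := by
          rw [eq_div_iff (by positivity),
            show (2:ℝ)^(-(5/4*M)) * (M ^ ((3:ℝ)/2) * (2:ℝ)^(M*(5/4)))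
              = M ^ ((3:ℝ)/2) * ((2:ℝ)^(-(5/4*M)) * (2:ℝ)^(M*(5/4))) from by ring,
            ← Real.rpow_add (by norm_num), show -(5/4*M) + M*(5/4) = 0 by ring,
            Real.rpow_zero, mul_one]
      _ ≤ (Real.logb 2 w) ^ ((3:ℝ)/2) / w ^ ((5:ℝ)/4) :=
          div_le_div₀ (by positivity) hnum hden_pos hden
      _ = lam := hlam.symm
  -- E bounds
  have h2M_ge1 : (1:ℝ) ≤ 2*M := by linarith
  have hpow_d : ∀ j : ℕ, j ≤ d → (2*M)^j ≤ (2:ℝ)^(M/400) := by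
    intro j hj
    have h1 : (2*M)^j ≤ (2*M)^d := pow_le_pow_right₀ h2M_ge1 hj
    have h2 : (2*M)^d = (2:ℝ)^(Real.logb 2 (2*M) * d) := by
      rw [Real.rpow_mul (by norm_num), Real.rpow_logb (by norm_num) (by norm_num) (by linarith),
        Real.rpow_natCast]
    have h3 : Real.logb 2 (2*M) * d ≤ M/400 := by
      rw [Real.logb_mul (by norm_num) (by linarith), Real.logb_self_eq_one (by norm_num)]
      have h4 : (1:ℝ) * d ≤ Real.logb 2 M * d :=
        mul_le_mul_of_nonneg_right hlogb1 (by linarith)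
      have h5 : Real.logb 2 M * (d:ℝ) = (d:ℝ) * Real.logb 2 M := mul_comm _ _
      linarith
    calc (2*M)^j ≤ (2*M)^d := h1
      _ = (2:ℝ)^(Real.logb 2 (2*M) * d) := h2
      _ ≤ (2:ℝ)^(M/400) := aux_rpow_le h3
  have hE_le : ∀ j : ℕ, j ≤ d → (2*M)^j * lam ≤ (2:ℝ)^(-(11/10*M)) := by
    intro j hj
    calc (2*M)^j * lam ≤ (2:ℝ)^(M/400) * (2:ℝ)^(-(9/8*M)) := by
          apply mul_le_mul (hpow_d j hj) hlam_up hlam0.le (by positivity)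
      _ = (2:ℝ)^(M/400 + -(9/8*M)) := (Real.rpow_add (by norm_num) _ _).symm
      _ ≤ (2:ℝ)^(-(11/10*M)) := aux_rpow_le (by linarith)
  have hwE' : ∀ E' : ℝ, 0 ≤ E' → E' ≤ (2:ℝ)^(-(11/10*M)) → w * E' ≤ 1/4 := by
    intro E' hE'0 hE'le
    calc w * E' ≤ (M * (2:ℝ)^M) * (2:ℝ)^(-(11/10*M)) := by
          apply mul_le_mul hw_le hE'le hE'0 (by positivity)
      _ ≤ ((2:ℝ)^(M/50) * (2:ℝ)^M) * (2:ℝ)^(-(11/10*M)) := by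
          apply mul_le_mul_of_nonneg_right _ (by positivity)
          exact mul_le_mul_of_nonneg_right hM50 h2M0.le
      _ = (2:ℝ)^(M/50 + M + -(11/10*M)) := by
          rw [← Real.rpow_add (by norm_num), ← Real.rpow_add (by norm_num)]
      _ ≤ (2:ℝ)^((-2:ℤ):ℝ) := aux_rpow_le (by push_cast; linarith)
      _ = 1/4 := by rw [Real.rpow_intCast]; norm_num
  have hone_le_pow : ∀ j : ℕ, (1:ℝ) ≤ (2*M)^j := fun j => one_le_pow₀ h2M_ge1
  have hlam_le_E : ∀ j : ℕ, lam ≤ (2*M)^j * lam := fun j =>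
    le_mul_of_one_le_left hlam0.le (hone_le_pow j)
  -- main downward induction (as upward induction on j = d-1-k)
  have key : ∀ j : ℕ, j ≤ d - 2 → |t (d-1-j) * q - p| ≤ (2*M)^j * lam := by
    intro j
    induction j with
    | zero =>
      intro _
      simp only [Nat.sub_zero, pow_zero, one_mul]
      rw [htd, div_mul_cancel₀ _ hq0.ne']
      rw [show p - lam - p = -lam from by ring, abs_neg, abs_of_pos hlam0]
    | succ j ih =>
      intro hj
      have hih := ih (by omega)
      have hEnn : (0:ℝ) ≤ (2*M)^j * lam := mul_nonneg (pow_nonneg (by linarith) j) hlam0.le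
      have hstep := step_bound M p q w lam (t (d-1-j)) ((2*M)^j * lam) hM hp hq hw0
        hwp1 hwp2 hlam_lo (hlam_le_E j) (hE_le j (by omega))
        (hwE' _ hEnn (hE_le j (by omega))) hih
      have hrec' := hrec (d-1-j) (by omega) (by omega)
      rw [show d-1-(j+1) = (d-1-j) - 1 from by omega, hrec',
        div_mul_cancel₀ _ hq0.ne']
      calc |(1 - t (d-1-j))^(q*w) - lam - p| ≤ 2*M*((2*M)^j * lam) := hstep
        _ = (2*M)^(j+1) * lam := by rw [pow_succ]; ring
  intro k hk1 hk2
  have h1 := key (d-1-k) (by omega)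
  rw [show d-1-(d-1-k) = k from by omega] at h1
  refine ⟨h1, ?_⟩
  have habs2 : |t k * q - p| ≤ (2:ℝ)^(-(11/10*M)) :=
    h1.trans (hE_le (d-1-k) (by omega))
  have heq : t k - q = (t k * q - p)/q := by
    rw [hpq, eq_div_iff hq0.ne']; ring
  rw [heq, abs_div, abs_of_pos hq0, div_le_iff₀ hq0]
  have hq11 : q^((1.1:ℝ)) * q = (2:ℝ)^(-M/2*(1.1:ℝ) + -M/2) := by
    rw [hq, Real.rpow_add (by norm_num), ← Real.rpow_mul (by norm_num)]
  rw [hq11]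
  refine habs2.trans (aux_rpow_le ?_)
  norm_num
  linarith
end
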